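/- arXiv:2504.20413 — 7 statements merged into one kernel-verified Lean document; each statement's English description precedes it below -/
import Mathlib

section
/- Consider a financial network of $N$ banks with nominal obligations $\bar p_{ij} \ge 0$ for $i \in [N]$, $j \in [N] \cup \{0\}$, $\bar p_{ii} = 0$, and $\bar p_{i0} > 0$ for each $i$. Let $\pi_{ij} = \bar p_{ij} / \sum_{k=0}^N \bar p_{ik}$. Then for every asset vector $x \in \mathbb{R}^N_+$, there exists a unique vector $p(x) \in \mathbb{R}^N_+$ satisfying the Eisenberg-Noe clearing equations $p_i(x) = \min\{\sum_{j=0}^N \bar p_{ij}, \; x_i + \sum_{j=1}^N \pi_{ji} p_j(x)\}$ for all $i \in [N]$. -/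
open Finset Function
open scoped ENNReal NNReal

/-- `|min a b - min a c| ≤ |b - c|`. -/
private lemma abs_min_sub_min_le (a b c : ℝ) : |min a b - min a c| ≤ |b - c| := by
  have key : ∀ u v : ℝ, min a u ≤ min a v + |u - v| := by
    intro u v
    have hu : u ≤ v + |u - v| := by
      have := le_abs_self (u - v); linarith
    have h1 : min a u ≤ min (a + |u - v|) (v + |u - v|) :=
      le_min ((min_le_left a u).trans (le_add_of_nonneg_right (abs_nonneg _))) ((min_le_right a u).trans hu)
    calc min a u ≤ min (a + |u - v|) (v + |u - v|) := h1
      _ = min a v + |u - v| := by rw [min_add_add_right]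
  rw [abs_sub_le_iff]
  constructor
  · have := key b c; linarith
  · have := key c b; rw [abs_sub_comm]; linarith

/-- In the Eisenberg-Noe model with strictly positive obligations to
society, for every nonnegative asset vector there exists a unique nonnegative
clearing payment vector. -/
theorem eisenberg_noe_exists_unique_clearing
    {N : ℕ} (pbar : Fin N → Fin N → ℝ) (pbar0 : Fin N → ℝ)
    (hnn : ∀ i j, 0 ≤ pbar i j) (hdiag : ∀ i, pbar i i = 0)
    (hpos : ∀ i, 0 < pbar0 i)
    (x : Fin N → ℝ) (hx : ∀ i, 0 ≤ x i) :
    ∃! p : Fin N → ℝ, (∀ i, 0 ≤ p i) ∧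
      ∀ i, p i = min (pbar0 i + ∑ j, pbar i j)
        (x i + ∑ j, (pbar j i / (pbar0 j + ∑ k, pbar j k)) * p j) := by
  classical
  rcases Nat.eq_zero_or_pos N with hN | hN
  · subst hN
    refine ⟨fun i => i.elim0, ⟨fun i => i.elim0, fun i => i.elim0⟩, ?_⟩
    intro q _
    funext i; exact i.elim0
  haveI : Nonempty (Fin N) := ⟨⟨0, hN⟩⟩
  set D : Fin N → ℝ := fun j => pbar0 j + ∑ k, pbar j k with hD
  have hDpos : ∀ j, 0 < D j := fun j =>
    add_pos_of_pos_of_nonneg (hpos j) (Finset.sum_nonneg fun k _ => hnn j k)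
  set F : (Fin N → ℝ) → (Fin N → ℝ) := fun p i =>
    min (pbar0 i + ∑ j, pbar i j) (x i + ∑ j, (pbar j i / D j) * p j) with hF
  -- the contraction constant
  set cr : ℝ := Finset.univ.sup' Finset.univ_nonempty (fun j => (∑ i, pbar j i) / D j) with hcr
  have hcr0 : 0 ≤ cr := by
    obtain ⟨j⟩ := ‹Nonempty (Fin N)›
    rw [hcr]
    exact le_trans (div_nonneg (Finset.sum_nonneg fun i _ => hnn j i) (hDpos j).le)
      (Finset.le_sup' (fun j => (∑ i, pbar j i) / D j) (Finset.mem_univ j))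
  have hcr1 : cr < 1 := by
    rw [hcr, Finset.sup'_lt_iff]
    intro j _
    rw [div_lt_one (hDpos j)]
    have := hpos j
    simp only [hD]; linarith
  have hrow : ∀ j, (∑ i, pbar j i / D j) ≤ cr := by
    intro j
    rw [← Finset.sum_div, hcr]
    exact Finset.le_sup' (fun j => (∑ i, pbar j i) / D j) (Finset.mem_univ j)
  -- key ℓ¹ contraction estimate
  have hkey : ∀ p q : Fin N → ℝ,
      (∑ i, |F p i - F q i|) ≤ cr * ∑ i, |p i - q i| := by
    intro p q
    calc (∑ i, |F p i - F q i|)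
        ≤ ∑ i, |(x i + ∑ j, (pbar j i / D j) * p j)
            - (x i + ∑ j, (pbar j i / D j) * q j)| :=
          Finset.sum_le_sum fun i _ => abs_min_sub_min_le _ _ _
      _ = ∑ i, |∑ j, (pbar j i / D j) * (p j - q j)| := by
          refine Finset.sum_congr rfl fun i _ => ?_
          congr 1
          rw [add_sub_add_left_eq_sub, ← Finset.sum_sub_distrib]
          exact Finset.sum_congr rfl fun j _ => (mul_sub _ _ _).symm
      _ ≤ ∑ i, ∑ j, (pbar j i / D j) * |p j - q j| := by
          refine Finset.sum_le_sum fun i _ => ?_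
          refine (Finset.abs_sum_le_sum_abs _ _).trans
            (Finset.sum_le_sum fun j _ => ?_)
          rw [abs_mul, abs_of_nonneg (div_nonneg (hnn j i) (hDpos j).le)]
      _ = ∑ j, (∑ i, pbar j i / D j) * |p j - q j| := by
          rw [Finset.sum_comm]
          exact Finset.sum_congr rfl fun j _ => (Finset.sum_mul _ _ _).symm
      _ ≤ ∑ j, cr * |p j - q j| :=
          Finset.sum_le_sum fun j _ =>
            mul_le_mul_of_nonneg_right (hrow j) (abs_nonneg _)
      _ = cr * ∑ j, |p j - q j| := (Finset.mul_sum _ _ _).symm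
  -- move to the ℓ¹ space
  haveI : Fact ((1 : ℝ≥0∞) ≤ 1) := ⟨le_refl _⟩
  set E := PiLp 1 (fun _ : Fin N => ℝ) with hE
  let e := WithLp.equiv 1 (Fin N → ℝ)
  set G : E → E := fun p => e.symm (F (e p)) with hG
  have hdistE : ∀ p q : E, dist p q = ∑ i, |e p i - e q i| := by
    intro p q
    rw [PiLp.dist_eq_sum (by norm_num : 0 < (1 : ℝ≥0∞).toReal)]
    simp [e, Real.dist_eq]
  set c : ℝ≥0 := ⟨cr, hcr0⟩ with hc
  have hc1 : c < 1 := by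
    rw [← NNReal.coe_lt_coe]; exact hcr1
  have hlipd : ∀ p q : E, dist (G p) (G q) ≤ c * dist p q := by
    intro p q
    rw [hdistE, hdistE]
    have : ∀ r : E, e (G r) = F (e r) := fun r => by simp [hG]
    rw [this, this]
    exact hkey (e p) (e q)
  have hlip : LipschitzWith c G := LipschitzWith.of_dist_le_mul hlipd
  have hcontr : ContractingWith c G := ⟨hc1, hlip⟩
  -- the nonnegative orthant
  set s : Set E := {p | ∀ i, 0 ≤ e p i} with hs
  have hs_closed : IsClosed s := by
    have : s = ⋂ i, (fun p : E => e p i) ⁻¹' Set.Ici 0 := by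
      ext p; simp [hs, Set.mem_iInter]
    rw [this]
    exact isClosed_iInter fun i =>
      isClosed_Ici.preimage ((continuous_apply i).comp (PiLp.continuous_ofLp _ _))
  have hsc : IsComplete s := hs_closed.isComplete
  have hsf : Set.MapsTo G s s := by
    intro p hp
    simp only [hs, Set.mem_setOf_eq] at hp ⊢
    intro i
    have he : e (G p) = F (e p) := by simp [hG]
    rw [he]
    show 0 ≤ F (e p) i
    exact le_min (by have := hDpos i; simp only [hD] at this; linarith)
      (add_nonneg (hx i) (Finset.sum_nonneg fun j _ =>
        mul_nonneg (div_nonneg (hnn j i) (hDpos j).le) (hp j)))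
  have hrestr : ContractingWith c (hsf.restrict G s s) := by
    refine ⟨hc1, LipschitzWith.of_dist_le_mul fun p q => ?_⟩
    rw [Subtype.dist_eq, Subtype.dist_eq, Set.MapsTo.val_restrict_apply,
      Set.MapsTo.val_restrict_apply]
    exact hlipd p q
  have h0s : (0 : E) ∈ s := by
    simp only [hs, Set.mem_setOf_eq]
    intro i
    exact le_rfl
  obtain ⟨y, hy_mem, hy_fix, -, -⟩ :=
    ContractingWith.exists_fixedPoint' hsc hsf hrestr h0s (edist_ne_top _ _)
  -- assemble
  refine ⟨e y, ⟨hy_mem, ?_⟩, ?_⟩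
  · intro i
    have : e (G y) = F (e y) := by simp [hG]
    conv_lhs => rw [show e y = e (G y) from by rw [hy_fix]]
    rw [this]
  · intro q ⟨hq0, hqeq⟩
    have hqfix : IsFixedPt G (e.symm q) := by
      have : F q = q := by
        funext i
        simp only [hF, hD]
        exact (hqeq i).symm
      simp only [IsFixedPt, hG]
      rw [Equiv.apply_symm_apply, this]
    have := hcontr.fixedPoint_unique' hqfix hy_fix
    calc q = e (e.symm q) := (Equiv.apply_symm_apply e q).symm
      _ = e y := by rw [this]
end

section
/- In the Eisenberg-Noe model with $\bar p_{i0} > 0$ for all $i$, the clearing payment function $p : \mathbb{R}^N_+ \to \mathbb{R}^N_+$ is increasing: if $x \le x'$ componentwise, then $p(x) \le p(x')$ componentwise. -/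
/-- `p` is the (nonnegative) Eisenberg-Noe clearing payment vector for asset
vector `x` in the network with interbank obligations `pbar` and obligations to
society `pbar0`. -/
def IsClearing {N : ℕ} (pbar : Fin N → Fin N → ℝ) (pbar0 : Fin N → ℝ)
    (x p : Fin N → ℝ) : Prop :=
  (∀ i, 0 ≤ p i) ∧
    ∀ i, p i = min (pbar0 i + ∑ j, pbar i j)
      (x i + ∑ j, (pbar j i / (pbar0 j + ∑ k, pbar j k)) * p j)

/-!
For `d = (p - p')⁺` the clearing equations give `d ≤ d ᵥ* Π`, with `Π` the matrix of relative
liabilities. Since every bank owes something to society, each row of `Π` sums to less than one,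
so summing the inequality over all banks forces `d = 0`.
-/

open Matrix

section StrictlySubstochastic

variable {ι : Type*} [Fintype ι] {A : Matrix ι ι ℝ}

lemma vecMul_mono_of_nonneg (hA : ∀ i j, 0 ≤ A i j) {u v : ι → ℝ} (huv : u ≤ v) :
    u ᵥ* A ≤ v ᵥ* A :=
  fun j => Finset.sum_le_sum fun i _ => mul_le_mul_of_nonneg_right (huv i) (hA i j)

lemma vecMul_nonneg_of_nonneg (hA : ∀ i j, 0 ≤ A i j) {v : ι → ℝ} (hv : 0 ≤ v) :
    0 ≤ v ᵥ* A := by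
  simpa only [zero_vecMul] using vecMul_mono_of_nonneg hA hv

lemma sum_vecMul_apply (A : Matrix ι ι ℝ) (v : ι → ℝ) :
    ∑ j, (v ᵥ* A) j = ∑ i, v i * ∑ j, A i j := by
  simp only [vecMul, dotProduct, Finset.mul_sum]
  exact Finset.sum_comm

lemma eq_zero_of_le_vecMul (hrow : ∀ i, ∑ j, A i j < 1)
    {d : ι → ℝ} (hd : 0 ≤ d) (hle : d ≤ d ᵥ* A) : d = 0 := by
  have hslack_nonneg : ∀ i ∈ Finset.univ, 0 ≤ (1 - ∑ j, A i j) * d i :=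
    fun i _ => mul_nonneg (sub_pos.2 (hrow i)).le (hd i)
  have hslack : ∑ i, (1 - ∑ j, A i j) * d i ≤ 0 :=
    calc ∑ i, (1 - ∑ j, A i j) * d i = ∑ i, d i - ∑ j, (d ᵥ* A) j := by
          rw [sum_vecMul_apply, ← Finset.sum_sub_distrib]
          exact Finset.sum_congr rfl fun i _ => by ring
      _ ≤ 0 := sub_nonpos.2 (Finset.sum_le_sum fun i _ => hle i)
  have hzero := (Finset.sum_eq_zero_iff_of_nonneg hslack_nonneg).1
    (le_antisymm hslack (Finset.sum_nonneg hslack_nonneg))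
  funext i
  exact (mul_eq_zero.1 (hzero i (Finset.mem_univ i))).resolve_left (sub_pos.2 (hrow i)).ne'

lemma min_sub_min_le_posPart_sub (c b b' : ℝ) : min c b - min c b' ≤ (b - b')⁺ :=
  sub_le_iff_le_add.2 <|
    calc min c b ≤ min ((b - b')⁺ + c) ((b - b')⁺ + b') :=
          min_le_min (le_add_of_nonneg_left (posPart_nonneg _))
            (by linarith [le_posPart (b - b')])
      _ = (b - b')⁺ + min c b' := min_add_add_left _ _ _

variable {c x x' p p' : ι → ℝ}

lemma posPart_sub_le_vecMul (hA : ∀ i j, 0 ≤ A i j) (hxx' : x ≤ x')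
    (hp : ∀ i, p i = min (c i) (x i + (p ᵥ* A) i))
    (hp' : ∀ i, p' i = min (c i) (x' i + (p' ᵥ* A) i)) :
    (p - p')⁺ ≤ (p - p')⁺ ᵥ* A := by
  have hbound : (p - p') ᵥ* A ≤ (p - p')⁺ ᵥ* A := vecMul_mono_of_nonneg hA (le_posPart _)
  have hnonneg : 0 ≤ (p - p')⁺ ᵥ* A := vecMul_nonneg_of_nonneg hA (posPart_nonneg _)
  refine (posPart_def _).trans_le (sup_le (fun i => ?_) hnonneg)
  have hshift : x i + (p ᵥ* A) i - (x' i + (p' ᵥ* A) i) ≤ ((p - p')⁺ ᵥ* A) i := by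
    have hi := hbound i
    rw [sub_vecMul, Pi.sub_apply] at hi
    linarith [hxx' i]
  calc (p - p') i = min (c i) (x i + (p ᵥ* A) i) - min (c i) (x' i + (p' ᵥ* A) i) := by
        rw [Pi.sub_apply, ← hp i, ← hp' i]
    _ ≤ (x i + (p ᵥ* A) i - (x' i + (p' ᵥ* A) i))⁺ := min_sub_min_le_posPart_sub _ _ _
    _ ≤ ((p - p')⁺ ᵥ* A) i := (posPart_def _).trans_le (sup_le hshift (hnonneg i))

theorem le_of_eq_min_add_vecMul (hA : ∀ i j, 0 ≤ A i j) (hrow : ∀ i, ∑ j, A i j < 1)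
    (hxx' : x ≤ x') (hp : ∀ i, p i = min (c i) (x i + (p ᵥ* A) i))
    (hp' : ∀ i, p' i = min (c i) (x' i + (p' ᵥ* A) i)) : p ≤ p' :=
  sub_nonpos.1 <| posPart_eq_zero.1 <|
    eq_zero_of_le_vecMul hrow (posPart_nonneg _) (posPart_sub_le_vecMul hA hxx' hp hp')

end StrictlySubstochastic

section RelativeLiabilities

variable {ι : Type*} [Fintype ι] {pbar : ι → ι → ℝ} {pbar0 : ι → ℝ}

/-- The paper's relative liabilities matrix `π`. -/
noncomputable def relLiabilities (pbar : ι → ι → ℝ) (pbar0 : ι → ℝ) : Matrix ι ι ℝ :=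
  fun j i => pbar j i / (pbar0 j + ∑ k, pbar j k)

lemma totalLiabilities_pos (hnn : ∀ i j, 0 ≤ pbar i j) (hpos : ∀ i, 0 < pbar0 i) (j : ι) :
    0 < pbar0 j + ∑ k, pbar j k :=
  add_pos_of_pos_of_nonneg (hpos j) (Finset.sum_nonneg fun k _ => hnn j k)

lemma relLiabilities_nonneg (hnn : ∀ i j, 0 ≤ pbar i j) (hpos : ∀ i, 0 < pbar0 i) (j i : ι) :
    0 ≤ relLiabilities pbar pbar0 j i :=
  div_nonneg (hnn j i) (totalLiabilities_pos hnn hpos j).le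

lemma sum_relLiabilities_lt_one (hnn : ∀ i j, 0 ≤ pbar i j) (hpos : ∀ i, 0 < pbar0 i)
    (j : ι) : ∑ i, relLiabilities pbar pbar0 j i < 1 := by
  have htot := totalLiabilities_pos hnn hpos j
  simp only [relLiabilities]
  rw [← Finset.sum_div, div_lt_one htot]
  linarith [hpos j]

end RelativeLiabilities

lemma IsClearing.eq_min_add_vecMul {N : ℕ} {pbar : Fin N → Fin N → ℝ} {pbar0 : Fin N → ℝ}
    {x p : Fin N → ℝ} (hp : IsClearing pbar pbar0 x p) (i : Fin N) :
    p i = min (pbar0 i + ∑ j, pbar i j) (x i + (p ᵥ* relLiabilities pbar pbar0) i) := by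
  simp only [hp.2 i, vecMul, dotProduct, relLiabilities, mul_comm]

theorem eisenberg_noe_clearing_monotone_general
    {N : ℕ} (pbar : Fin N → Fin N → ℝ) (pbar0 : Fin N → ℝ)
    (hnn : ∀ i j, 0 ≤ pbar i j)
    (hpos : ∀ i, 0 < pbar0 i)
    (x x' p p' : Fin N → ℝ)
    (hxx' : x ≤ x')
    (hp : IsClearing pbar pbar0 x p) (hp' : IsClearing pbar pbar0 x' p') :
    p ≤ p' :=
  le_of_eq_min_add_vecMul (relLiabilities_nonneg hnn hpos) (sum_relLiabilities_lt_one hnn hpos)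
    hxx' hp.eq_min_add_vecMul hp'.eq_min_add_vecMul

/-- The Eisenberg-Noe clearing payment function is increasing. -/
theorem eisenberg_noe_clearing_monotone
    {N : ℕ} (pbar : Fin N → Fin N → ℝ) (pbar0 : Fin N → ℝ)
    (hnn : ∀ i j, 0 ≤ pbar i j) (hdiag : ∀ i, pbar i i = 0)
    (hpos : ∀ i, 0 < pbar0 i)
    (x x' p p' : Fin N → ℝ) (hx : ∀ i, 0 ≤ x i) (hx' : ∀ i, 0 ≤ x' i)
    (hxx' : x ≤ x')
    (hp : IsClearing pbar pbar0 x p) (hp' : IsClearing pbar pbar0 x' p') :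
    p ≤ p' :=
  eisenberg_noe_clearing_monotone_general pbar pbar0 hnn hpos x x' p p' hxx' hp hp'
end

section
/- In the Eisenberg-Noe model with $\bar p_{i0} > 0$ for all $i$, the clearing payment function $p : \mathbb{R}^N_+ \to \mathbb{R}^N_+$ is concave: $p(\lambda x + (1-\lambda)x') \ge \lambda p(x) + (1-\lambda)p(x')$ componentwise for all $x, x' \in \mathbb{R}^N_+$ and $\lambda \in [0,1]$. -/
/-- The Eisenberg-Noe clearing payment function is concave. -/
theorem eisenberg_noe_clearing_concave
    {N : ℕ} (pbar : Fin N → Fin N → ℝ) (pbar0 : Fin N → ℝ)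
    (hnn : ∀ i j, 0 ≤ pbar i j) (hdiag : ∀ i, pbar i i = 0)
    (hpos : ∀ i, 0 < pbar0 i)
    (x x' p p' q : Fin N → ℝ) (hx : ∀ i, 0 ≤ x i) (hx' : ∀ i, 0 ≤ x' i)
    (lam : ℝ) (hlam : lam ∈ Set.Icc (0 : ℝ) 1)
    (hp : IsClearing pbar pbar0 x p) (hp' : IsClearing pbar pbar0 x' p')
    (hq : IsClearing pbar pbar0 (lam • x + (1 - lam) • x') q) :
    lam • p + (1 - lam) • p' ≤ q := by
  obtain ⟨hlam0, hlam1⟩ := hlam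
  have hlam1' : 0 ≤ 1 - lam := by linarith
  set π : Fin N → Fin N → ℝ :=
    fun j i => pbar j i / (pbar0 j + ∑ k, pbar j k) with hπ
  set P : Fin N → ℝ := fun i => pbar0 i + ∑ j, pbar i j with hPdef
  have hden : ∀ j, 0 < pbar0 j + ∑ k, pbar j k := by
    intro j
    have : 0 ≤ ∑ k, pbar j k := Finset.sum_nonneg fun k _ => hnn j k
    linarith [hpos j]
  have hπnn : ∀ j i, 0 ≤ π j i := fun j i =>
    div_nonneg (hnn j i) (hden j).le
  have hπrow : ∀ j, ∑ i, π j i < 1 := by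
    intro j
    have : ∑ i, π j i = (∑ i, pbar j i) / (pbar0 j + ∑ k, pbar j k) := by
      rw [hπ]; rw [← Finset.sum_div]
    rw [this, div_lt_one (hden j)]
    linarith [hpos j]
  set z : Fin N → ℝ := fun i => lam * p i + (1 - lam) * p' i with hz
  -- z is a subsolution
  have hzsub : ∀ i, z i ≤ min (P i)
      ((lam * x i + (1 - lam) * x' i) + ∑ j, π j i * z j) := by
    intro i
    have hpi := hp.2 i
    have hpi' := hp'.2 i
    refine le_min ?_ ?_
    · have h1 : p i ≤ P i := hpi.le.trans (min_le_left _ _)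
      have h2 : p' i ≤ P i := hpi'.le.trans (min_le_left _ _)
      have := mul_le_mul_of_nonneg_left h1 hlam0
      have := mul_le_mul_of_nonneg_left h2 hlam1'
      simp only [hz]
      nlinarith
    · have h1 : p i ≤ x i + ∑ j, π j i * p j := hpi.le.trans (min_le_right _ _)
      have h2 : p' i ≤ x' i + ∑ j, π j i * p' j := hpi'.le.trans (min_le_right _ _)
      have hsum : ∑ j, π j i * z j
          = lam * ∑ j, π j i * p j + (1 - lam) * ∑ j, π j i * p' j := by
        rw [Finset.mul_sum, Finset.mul_sum, ← Finset.sum_add_distrib]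
        refine Finset.sum_congr rfl fun j _ => by simp only [hz]; ring
      have e1 := mul_le_mul_of_nonneg_left h1 hlam0
      have e2 := mul_le_mul_of_nonneg_left h2 hlam1'
      simp only [hz]
      rw [hsum]
      nlinarith
  -- key: z ≤ q
  have key : ∀ i, z i ≤ q i := by
    by_contra hcon
    push_neg at hcon
    obtain ⟨i0, hi0⟩ := hcon
    set S := Finset.univ.filter (fun i => q i < z i) with hS
    have hi0S : i0 ∈ S := by simp [hS, hi0]
    set d : Fin N → ℝ := fun i => z i - q i with hd
    have hdS : ∀ i ∈ S, 0 < d i := by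
      intro i hi
      simp only [hS, Finset.mem_filter] at hi
      simp only [hd]; linarith [hi.2]
    have key2 : ∀ i ∈ S, d i ≤ ∑ j, π j i * max (d j) 0 := by
      intro i hi
      simp only [hS, Finset.mem_filter] at hi
      have hiqz : q i < z i := hi.2
      have hqi : q i = (lam • x + (1 - lam) • x') i + ∑ j, π j i * q j := by
        have hmin := hq.2 i
        rcases min_cases (pbar0 i + ∑ j, pbar i j)
            ((lam • x + (1 - lam) • x') i + ∑ j, π j i * q j) with h | h
        · exfalso
          have hzP : z i ≤ P i := (hzsub i).trans (min_le_left _ _)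
          rw [hmin, h.1] at hiqz
          simp only [hPdef] at hzP
          linarith
        · rw [hmin, h.1]
      have hzi : z i ≤ (lam * x i + (1 - lam) * x' i) + ∑ j, π j i * z j :=
        (hzsub i).trans (min_le_right _ _)
      have hxq : (lam • x + (1 - lam) • x') i = lam * x i + (1 - lam) * x' i := by
        simp [Pi.add_apply, Pi.smul_apply, smul_eq_mul]
      rw [hxq] at hqi
      have hstep : d i ≤ ∑ j, π j i * d j := by
        have : ∑ j, π j i * d j = (∑ j, π j i * z j) - ∑ j, π j i * q j := by
          rw [← Finset.sum_sub_distrib]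
          refine Finset.sum_congr rfl fun j _ => by simp only [hd]; ring
        simp only [hd]
        rw [this]
        linarith
      refine hstep.trans (Finset.sum_le_sum fun j _ => ?_)
      exact mul_le_mul_of_nonneg_left (le_max_left _ _) (hπnn j i)
    have sum1 : ∑ i ∈ S, d i ≤ ∑ i ∈ S, ∑ j, π j i * max (d j) 0 :=
      Finset.sum_le_sum key2
    have sum2 : ∑ i ∈ S, ∑ j, π j i * max (d j) 0
        = ∑ j, (∑ i ∈ S, π j i) * max (d j) 0 := by
      rw [Finset.sum_comm]
      exact Finset.sum_congr rfl fun j _ => by rw [Finset.sum_mul]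
    have sum3 : ∑ j, (∑ i ∈ S, π j i) * max (d j) 0
        ≤ ∑ j, (∑ i, π j i) * max (d j) 0 := by
      refine Finset.sum_le_sum fun j _ => ?_
      refine mul_le_mul_of_nonneg_right ?_ (le_max_right _ _)
      exact Finset.sum_le_sum_of_subset_of_nonneg (Finset.subset_univ S)
        (fun i _ _ => hπnn j i)
    have sum4 : ∑ j, (∑ i, π j i) * max (d j) 0 < ∑ j, max (d j) 0 := by
      refine Finset.sum_lt_sum (fun j _ => ?_) ⟨i0, Finset.mem_univ i0, ?_⟩
      · exact mul_le_of_le_one_left (le_max_right _ _) (hπrow j).le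
      · have hd0 : 0 < max (d i0) 0 := lt_max_of_lt_left (hdS i0 hi0S)
        exact mul_lt_of_lt_one_left hd0 (hπrow i0)
    have sum5 : ∑ j, max (d j) 0 = ∑ j ∈ S, d j := by
      rw [← Finset.sum_subset (Finset.subset_univ S)
        (fun j _ hj => ?_)]
      · exact Finset.sum_congr rfl fun j hj => max_eq_left (hdS j hj).le
      · simp only [hS, Finset.mem_filter, Finset.mem_univ, true_and, not_lt] at hj
        simp only [hd]
        exact max_eq_right (by linarith)
    linarith
  intro i
  simpa [Pi.add_apply, Pi.smul_apply, smul_eq_mul] using key i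
end

section
/- In the Eisenberg-Noe model with $\bar p_{i0} > 0$ for all $i$, for any banks $i \ne j$, $x \in \mathbb{R}^N_+$, and $\delta \ge 0$, it holds $p_j(x + \delta e_i) \le p_j(x + \delta \pi_{i\cdot})$, where $\pi_{i\cdot} = (\pi_{i1}, \ldots, \pi_{iN})^\top$ is the $i$-th row of relative interbank liabilities. -/
/-- Comparison lemma: if `p` is a fixed point of the clearing map and `y` is
superharmonic (map of `y` is `≤ y`), and row sums of `π` are `< 1`, then `p ≤ y`. -/
lemma en_compare {N : ℕ} (P : Fin N → ℝ) (π : Fin N → Fin N → ℝ)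
    (a p y : Fin N → ℝ)
    (hπnn : ∀ l k, 0 ≤ π l k) (hr : ∀ l, ∑ k, π l k < 1)
    (hfix : ∀ k, p k = min (P k) (a k + ∑ l, π l k * p l))
    (hsup : ∀ k, min (P k) (a k + ∑ l, π l k * y l) ≤ y k) :
    ∀ k, p k ≤ y k := by
  set m : Fin N → ℝ := fun k => max (p k - y k) 0 with hm
  have hmnn : ∀ k, 0 ≤ m k := fun k => le_max_right _ _
  have key : ∀ k, m k ≤ ∑ l, π l k * m l := by
    intro k
    by_cases h : p k ≤ y k
    · have h0 : m k = 0 := max_eq_right (by linarith)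
      rw [h0]
      exact Finset.sum_nonneg fun l _ => mul_nonneg (hπnn l k) (hmnn l)
    · push_neg at h
      have hpP : p k ≤ P k := (hfix k) ▸ min_le_left _ _
      have hyP : y k < P k := lt_of_lt_of_le h hpP
      have hA : a k + ∑ l, π l k * y l ≤ y k := by
        rcases min_cases (P k) (a k + ∑ l, π l k * y l) with ⟨he, _⟩ | ⟨he, _⟩
        · exfalso; have hs := hsup k; rw [he] at hs; linarith
        · have hs := hsup k; rw [he] at hs; exact hs
      have hp2 : p k ≤ a k + ∑ l, π l k * p l := (hfix k) ▸ min_le_right _ _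
      have hsum : ∑ l, π l k * p l - ∑ l, π l k * y l ≤ ∑ l, π l k * m l := by
        rw [← Finset.sum_sub_distrib]
        apply Finset.sum_le_sum
        intro l _
        have he : π l k * p l - π l k * y l = π l k * (p l - y l) := by ring
        rw [he]
        exact mul_le_mul_of_nonneg_left (le_max_left _ _) (hπnn l k)
      have hmk : m k = p k - y k := max_eq_left (by linarith)
      rw [hmk]; linarith
  have hs : ∑ k, m k ≤ ∑ l, m l * (∑ k, π l k) := by
    calc ∑ k, m k ≤ ∑ k, ∑ l, π l k * m l := Finset.sum_le_sum fun k _ => key k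
    _ = ∑ l, ∑ k, π l k * m l := Finset.sum_comm
    _ = ∑ l, m l * (∑ k, π l k) := by
        refine Finset.sum_congr rfl fun l _ => ?_
        rw [Finset.mul_sum]
        exact Finset.sum_congr rfl fun k _ => by ring
  have hzero : ∀ k, m k = 0 := by
    by_contra hc
    push_neg at hc
    obtain ⟨k0, hk0⟩ := hc
    have hk0pos : 0 < m k0 := lt_of_le_of_ne (hmnn k0) (Ne.symm hk0)
    have hlt : ∑ l, m l * (∑ k, π l k) < ∑ l, m l := by
      apply Finset.sum_lt_sum
      · intro l _
        calc m l * (∑ k, π l k) ≤ m l * 1 :=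
              mul_le_mul_of_nonneg_left (le_of_lt (hr l)) (hmnn l)
        _ = m l := mul_one _
      · exact ⟨k0, Finset.mem_univ _, by
          calc m k0 * (∑ k, π k0 k) < m k0 * 1 :=
                (mul_lt_mul_iff_right₀ hk0pos).2 (hr k0)
          _ = m k0 := mul_one _⟩
    linarith
  intro k
  have h1 : p k - y k ≤ m k := le_max_left _ _
  rw [hzero k] at h1
  linarith

/-- Giving cash `δ` directly to bank `i`'s creditors (distributed
proportionally as `δ π_{i·}`) yields weakly higher clearing payments by any other
bank `j` than giving `δ` to bank `i` itself. -/
theorem eisenberg_noe_redistribution_bound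
    {N : ℕ} (pbar : Fin N → Fin N → ℝ) (pbar0 : Fin N → ℝ)
    (hnn : ∀ i j, 0 ≤ pbar i j) (hdiag : ∀ i, pbar i i = 0)
    (hpos : ∀ i, 0 < pbar0 i)
    (i j : Fin N) (hij : i ≠ j)
    (x : Fin N → ℝ) (hx : ∀ k, 0 ≤ x k) (δ : ℝ) (hδ : 0 ≤ δ)
    (p p' : Fin N → ℝ)
    (hp : IsClearing pbar pbar0 (x + δ • (Pi.single i 1 : Fin N → ℝ)) p)
    (hp' : IsClearing pbar pbar0
      (x + δ • (fun k => pbar i k / (pbar0 i + ∑ l, pbar i l))) p') :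
    p j ≤ p' j := by
  obtain ⟨hpnn, hpeq⟩ := hp
  obtain ⟨hp'nn, hp'eq⟩ := hp'
  have hPpos : ∀ l : Fin N, 0 < pbar0 l + ∑ m, pbar l m := fun l =>
    add_pos_of_pos_of_nonneg (hpos l) (Finset.sum_nonneg fun m _ => hnn l m)
  have hπnn : ∀ l k : Fin N, 0 ≤ pbar l k / (pbar0 l + ∑ m, pbar l m) :=
    fun l k => div_nonneg (hnn l k) (hPpos l).le
  have hr : ∀ l : Fin N, ∑ k, pbar l k / (pbar0 l + ∑ m, pbar l m) < 1 := by
    intro l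
    rw [← Finset.sum_div, div_lt_one (hPpos l)]
    linarith [hpos l]
  -- the superharmonic candidate
  set y : Fin N → ℝ := fun k => p' k + (if k = i then δ else 0) with hy
  have hfix : ∀ k, p k = min (pbar0 k + ∑ m, pbar k m)
      ((x k + (if k = i then δ else 0))
        + ∑ l, (pbar l k / (pbar0 l + ∑ m, pbar l m)) * p l) := by
    intro k
    have h := hpeq k
    have he : (x + δ • (Pi.single i 1 : Fin N → ℝ)) k
        = x k + (if k = i then δ else 0) := by
      by_cases hk : k = i <;> simp [hk, Pi.single_apply]
    rw [he] at h
    exact h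
  have hsumy : ∀ k, ∑ l, (pbar l k / (pbar0 l + ∑ m, pbar l m)) * y l
      = (∑ l, (pbar l k / (pbar0 l + ∑ m, pbar l m)) * p' l)
        + (pbar i k / (pbar0 i + ∑ m, pbar i m)) * δ := by
    intro k
    have he : ∀ l, (pbar l k / (pbar0 l + ∑ m, pbar l m)) * y l
        = (pbar l k / (pbar0 l + ∑ m, pbar l m)) * p' l
          + (if l = i then (pbar i k / (pbar0 i + ∑ m, pbar i m)) * δ else 0) := by
      intro l
      by_cases hl : l = i
      · subst hl; simp [hy]; ring
      · simp [hy, hl]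
    rw [Finset.sum_congr rfl fun l _ => he l, Finset.sum_add_distrib]
    simp
  have hmin : ∀ A B c : ℝ, 0 ≤ c → min A (B + c) ≤ min A B + c := by
    intro A B c hc
    calc min A (B + c) ≤ min (A + c) (B + c) := min_le_min (by linarith) le_rfl
    _ = min A B + c := min_add_add_right A B c
  have hsup : ∀ k, min (pbar0 k + ∑ m, pbar k m)
      ((x k + (if k = i then δ else 0))
        + ∑ l, (pbar l k / (pbar0 l + ∑ m, pbar l m)) * y l) ≤ y k := by
    intro k
    rw [hsumy k]
    have h' := hp'eq k
    have hb : (x + δ • (fun k' => pbar i k' / (pbar0 i + ∑ l, pbar i l))) k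
        = x k + δ * (pbar i k / (pbar0 i + ∑ m, pbar i m)) := by
      simp
    rw [hb] at h'
    by_cases hk : k = i
    · subst hk
      have hπkk : pbar k k / (pbar0 k + ∑ m, pbar k m) = 0 := by
        simp [hdiag k]
      rw [hπkk] at h' ⊢
      have hyk : y k = p' k + δ := by simp [hy]
      rw [hyk, if_pos rfl, h']
      have harg : x k + δ + ((∑ l, pbar l k / (pbar0 l + ∑ m, pbar l m) * p' l) + 0 * δ)
          = (x k + δ * 0 + ∑ l, pbar l k / (pbar0 l + ∑ m, pbar l m) * p' l) + δ := by
        ring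
      rw [harg]
      exact hmin _ _ _ hδ
    · have hyk : y k = p' k := by simp [hy, hk]
      rw [hyk, if_neg hk, h']
      apply le_of_eq
      congr 1
      ring
  have hfinal := en_compare (fun l => pbar0 l + ∑ m, pbar l m)
    (fun l k => pbar l k / (pbar0 l + ∑ m, pbar l m))
    (fun k => x k + (if k = i then δ else 0)) p y hπnn hr hfix hsup j
  have hyj : y j = p' j := by simp [hy, Ne.symm hij]
  rw [hyj] at hfinal
  exact hfinal
end

section
/- Let $\lambda \in \{0,1\}^N$ and let $\pi \in \mathbb{R}^{N \times N}_+$ be a substochastic matrix with $\sum_{j=1}^N \pi_{ij} \le 1 - \pi_{i0}$ for each $i$, where $\pi_{i0} > 0$ for all $i$. Then $I_N - \operatorname{diag}(\lambda)\pi$ is invertible and for all $i \ne j$, $[(I_N - \operatorname{diag}(\lambda)\pi)^{-1}]_{ij} \le (1 - \pi_{i0})\,[(I_N - \operatorname{diag}(\lambda)\pi)^{-1}]_{jj}$. -/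
open Matrix

/-- For a substochastic nonnegative matrix `π` with row sums at most
`1 - π_{i0}` where `π_{i0} > 0`, and any binary vector `λ`, the Leontief matrix
`I - diag(λ)π` is invertible and its inverse satisfies the entrywise bound
`[(I - diag(λ)π)⁻¹]_{ij} ≤ (1 - π_{i0}) [(I - diag(λ)π)⁻¹]_{jj}` for `i ≠ j`. -/
theorem leontief_inverse_ratio_bound
    {N : ℕ} (lam : Fin N → ℝ) (hlam : ∀ i, lam i = 0 ∨ lam i = 1)
    (π : Matrix (Fin N) (Fin N) ℝ) (hπnn : ∀ i j, 0 ≤ π i j)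
    (π0 : Fin N → ℝ) (hπ0 : ∀ i, 0 < π0 i)
    (hrow : ∀ i, ∑ j, π i j ≤ 1 - π0 i) :
    IsUnit (1 - Matrix.diagonal lam * π) ∧
      ∀ i j, i ≠ j →
        (1 - Matrix.diagonal lam * π)⁻¹ i j ≤
          (1 - π0 i) * (1 - Matrix.diagonal lam * π)⁻¹ j j := by
  set A : Matrix (Fin N) (Fin N) ℝ := Matrix.diagonal lam * π with hAdef
  have hAapp : ∀ i l, A i l = lam i * π i l := by
    intro i l; simp [hAdef, Matrix.diagonal_mul]
  have hAnn : ∀ i l, 0 ≤ A i l := by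
    intro i l; rw [hAapp]
    rcases hlam i with h | h <;> simp [h, hπnn i l]
  have hcle : ∀ i, ∑ l, A i l ≤ 1 - π0 i := by
    intro i
    have h1 : (0:ℝ) ≤ ∑ j, π i j := Finset.sum_nonneg fun j _ => hπnn i j
    rcases hlam i with h | h
    · simp only [hAapp, h, zero_mul, Finset.sum_const_zero]
      linarith [hrow i]
    · simp only [hAapp, h, one_mul]
      exact hrow i
  have hcnn : ∀ i, 0 ≤ ∑ l, A i l := fun i => Finset.sum_nonneg fun l _ => hAnn i l
  have hclt : ∀ i, ∑ l, A i l < 1 := fun i => lt_of_le_of_lt (hcle i) (by linarith [hπ0 i])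
  -- invertibility
  have hdet : IsUnit (1 - A).det := by
    rw [isUnit_iff_ne_zero]
    intro hdet0
    obtain ⟨v, hv0, hv⟩ := (Matrix.exists_mulVec_eq_zero_iff).2 hdet0
    have hvA : ∀ i, v i = ∑ l, A i l * v l := by
      intro i
      have h1 : (1 - A).mulVec v = v - A.mulVec v := by
        rw [Matrix.sub_mulVec, Matrix.one_mulVec]
      rw [h1] at hv
      have h2 : v i = A.mulVec v i := by
        have := congrFun hv i
        simp only [Pi.sub_apply, Pi.zero_apply] at this
        linarith
      rw [h2]
      simp [Matrix.mulVec, dotProduct]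
    obtain ⟨i0, hi0⟩ := Function.ne_iff.1 hv0
    obtain ⟨i, -, hi⟩ := Finset.exists_max_image Finset.univ (fun l => |v l|)
      ⟨i0, Finset.mem_univ i0⟩
    have hipos : 0 < |v i| := lt_of_lt_of_le (abs_pos.2 hi0) (hi i0 (Finset.mem_univ i0))
    have hb : |v i| ≤ (∑ l, A i l) * |v i| := by
      calc |v i| = |∑ l, A i l * v l| := by rw [← hvA i]
        _ ≤ ∑ l, |A i l * v l| := Finset.abs_sum_le_sum_abs _ _
        _ = ∑ l, A i l * |v l| := by
            refine Finset.sum_congr rfl fun l _ => ?_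
            rw [abs_mul, abs_of_nonneg (hAnn i l)]
        _ ≤ ∑ l, A i l * |v i| := Finset.sum_le_sum fun l _ =>
                mul_le_mul_of_nonneg_left (hi l (Finset.mem_univ l)) (hAnn i l)
        _ = (∑ l, A i l) * |v i| := by rw [Finset.sum_mul]
    nlinarith [hclt i]
  have hu : IsUnit (1 - A) := (Matrix.isUnit_iff_isUnit_det _).2 hdet
  set B : Matrix (Fin N) (Fin N) ℝ := (1 - A)⁻¹ with hBdef
  have hBeq : B = 1 + A * B := by
    have h1 : (1 - A) * B = 1 := Matrix.mul_nonsing_inv _ hdet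
    rw [sub_mul, one_mul, sub_eq_iff_eq_add] at h1
    exact h1
  have hBid : ∀ k j, B k j = (if k = j then (1:ℝ) else 0) + ∑ l, A k l * B l j := by
    intro k j
    conv_lhs => rw [hBeq]
    simp [Matrix.add_apply, Matrix.one_apply, Matrix.mul_apply]
  -- nonnegativity of B
  have hBnn : ∀ k j, 0 ≤ B k j := by
    intro k j
    by_contra hneg
    push_neg at hneg
    obtain ⟨k0, -, hk0⟩ := Finset.exists_min_image Finset.univ (fun l => B l j)
      ⟨k, Finset.mem_univ k⟩
    have hm : B k0 j < 0 := lt_of_le_of_lt (hk0 k (Finset.mem_univ k)) hneg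
    have hd : (0:ℝ) ≤ (if k0 = j then (1:ℝ) else 0) := by positivity
    have hsum : (∑ l, A k0 l) * B k0 j ≤ ∑ l, A k0 l * B l j := by
      rw [Finset.sum_mul]
      exact Finset.sum_le_sum fun l _ =>
        mul_le_mul_of_nonneg_left (hk0 l (Finset.mem_univ l)) (hAnn k0 l)
    have := hBid k0 j
    nlinarith [hclt k0]
  -- column maximum at diagonal
  have hBle : ∀ k j, B k j ≤ B j j := by
    intro k j
    obtain ⟨k0, -, hk0⟩ := Finset.exists_max_image Finset.univ (fun l => B l j)
      ⟨k, Finset.mem_univ k⟩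
    by_cases hkj : k0 = j
    · exact le_trans (hk0 k (Finset.mem_univ k)) (hkj ▸ le_refl _)
    · have hsum : ∑ l, A k0 l * B l j ≤ (∑ l, A k0 l) * B k0 j := by
        rw [Finset.sum_mul]
        exact Finset.sum_le_sum fun l _ =>
          mul_le_mul_of_nonneg_left (hk0 l (Finset.mem_univ l)) (hAnn k0 l)
      have hid := hBid k0 j
      rw [if_neg hkj, zero_add] at hid
      have hM0 : B k0 j ≤ 0 := by nlinarith [hclt k0]
      exact le_trans (le_trans (hk0 k (Finset.mem_univ k)) hM0) (hBnn j j)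
  refine ⟨hu, fun i j hij => ?_⟩
  have hid := hBid i j
  rw [if_neg hij, zero_add] at hid
  calc B i j = ∑ l, A i l * B l j := hid
    _ ≤ ∑ l, A i l * B j j := Finset.sum_le_sum fun l _ =>
        mul_le_mul_of_nonneg_left (hBle l j) (hAnn i l)
    _ = (∑ l, A i l) * B j j := by rw [Finset.sum_mul]
    _ ≤ (1 - π0 i) * B j j := mul_le_mul_of_nonneg_right (hcle i) (hBnn j j)
end

section
/- Let $f : \mathbb{R}^N \to \mathbb{R}$ be twice continuously differentiable and concave such that $d^\top \nabla^2 f(x) d = 0$ for every $x$ and every $d$ with $\sum_i d_i = 0$. Then there exist a function $G : \mathbb{R} \to \mathbb{R}$ and a vector $\beta \in \mathbb{R}^N$ with $\sum_i \beta_i = 0$ such that $f(x) = G(\sum_{i=1}^N x_i) + \beta^\top x$ for all $x$. -/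
/-!
Concavity makes the Hessian `H x` of `f` negative semidefinite, and by Cauchy–Schwarz a
semidefinite form kills every vector `d` with `H x d d = 0`; so `H x d = 0` for each zero-sum `d`.
The derivative of `f` in a zero-sum direction `d` is therefore independent of the base point, and
as a linear functional on the zero-sum hyperplane it is `d ↦ ∑ i, β i * d i` for a zero-sum `β`.
Integrating along the zero-sum segment from the diagonal point `(s/N, …, s/N)`, `s = ∑ i, x i`,
to `x` gives `f x = f (s/N, …, s/N) + ∑ i, β i * x i`.
-/

open Set

section Calculus

variable {E F : Type*} [NormedAddCommGroup E] [NormedSpace ℝ E]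
  [NormedAddCommGroup F] [NormedSpace ℝ F]

theorem ContDiff.differentiable_fderiv {f : E → F} {n : WithTop ℕ∞} (hf : ContDiff ℝ n f)
    (hn : 2 ≤ n) : Differentiable ℝ (fderiv ℝ f) :=
  (hf.fderiv_right (m := 1) hn).differentiable one_ne_zero

theorem HasFDerivAt.hasDerivAt_add_smul {f : E → F} {f' : E →L[ℝ] F} {x v : E} {t : ℝ}
    (hf : HasFDerivAt f f' (x + t • v)) :
    HasDerivAt (fun t : ℝ => f (x + t • v)) (f' v) t := by
  have hline : HasDerivAt (fun t : ℝ => x + t • v) v t := by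
    simpa using ((hasDerivAt_id t).smul_const v).const_add x
  exact hf.comp_hasDerivAt t hline

theorem hasFDerivAt_fderiv_apply {f : E → F} {x : E}
    (hf : DifferentiableAt ℝ (fderiv ℝ f) x) (v : E) :
    HasFDerivAt (fun y => fderiv ℝ f y v) ((fderiv ℝ (fderiv ℝ f) x).flip v) x :=
  (ContinuousLinearMap.apply ℝ F v).hasFDerivAt.comp x hf.hasFDerivAt

theorem apply_add_eq_of_forall_fderiv_apply_eq {f : E → F} (hf : Differentiable ℝ f)
    {d : E} {c : F} (h : ∀ y, fderiv ℝ f y d = c) (x : E) : f (x + d) = f x + c := by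
  have hderiv (t : ℝ) : HasDerivAt (fun t : ℝ => f (x + t • d) - t • c) 0 t := by
    have := ((hf (x + t • d)).hasFDerivAt.hasDerivAt_add_smul).sub ((hasDerivAt_id t).smul_const c)
    rwa [h, one_smul, sub_self] at this
  have hconst := is_const_of_deriv_eq_zero (fun t => (hderiv t).differentiableAt)
    (fun t => (hderiv t).deriv) 1 0
  simp only [one_smul, zero_smul, add_zero, sub_zero] at hconst
  rw [← hconst]
  abel

theorem ConcaveOn.fderiv_fderiv_apply_self_nonpos {f : E → ℝ} (hconc : ConcaveOn ℝ univ f)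
    (hf : Differentiable ℝ f) {x : E} (hf' : DifferentiableAt ℝ (fderiv ℝ f) x) (v : E) :
    fderiv ℝ (fderiv ℝ f) x v v ≤ 0 := by
  have hline : ConcaveOn ℝ univ (fun t : ℝ => f (x + t • v)) := by
    have hcomp : (fun t : ℝ => f (x + t • v)) = f ∘ AffineMap.lineMap x (x + v) := by
      ext t
      simp [AffineMap.lineMap_apply, add_comm]
    simpa [hcomp] using hconc.comp_affineMap (AffineMap.lineMap x (x + v))
  have hderiv (t : ℝ) : HasDerivAt (fun t : ℝ => f (x + t • v)) (fderiv ℝ f (x + t • v) v) t :=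
    (hf _).hasFDerivAt.hasDerivAt_add_smul
  have hanti : Antitone (fun t : ℝ => fderiv ℝ f (x + t • v) v) := fun s t hst => by
    have := hline.antitoneOn_deriv (fun t _ => (hderiv t).differentiableAt) trivial trivial hst
    rwa [(hderiv s).deriv, (hderiv t).deriv] at this
  have hsecond : HasDerivAt (fun t : ℝ => fderiv ℝ f (x + t • v) v)
      (fderiv ℝ (fderiv ℝ f) (x + (0 : ℝ) • v) v v) 0 :=
    (hasFDerivAt_fderiv_apply (by rwa [zero_smul, add_zero]) v).hasDerivAt_add_smul
  simpa [hsecond.deriv] using hanti.deriv_nonpos (x := 0)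

theorem ConcaveOn.fderiv_fderiv_apply_eq_zero {f : E → ℝ} (hconc : ConcaveOn ℝ univ f)
    (hf : ContDiff ℝ 2 f) {x d : E} (hd : fderiv ℝ (fderiv ℝ f) x d d = 0) (v : E) :
    fderiv ℝ (fderiv ℝ f) x v d = 0 := by
  have hsymm : IsSymmSndFDerivAt ℝ f x := hf.contDiffAt.isSymmSndFDerivAt (by simp)
  set B := (-fderiv ℝ (fderiv ℝ f) x).toBilinForm
  have hB_nonneg (w : E) : 0 ≤ B w w := by
    simpa [B] using hconc.fderiv_fderiv_apply_self_nonpos (hf.differentiable two_ne_zero)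
      (hf.differentiable_fderiv le_rfl x) w
  have hB_symm : LinearMap.IsSymm B := ⟨fun w u => by simp [B, hsymm w u]⟩
  have hker : B d = 0 := (B.apply_apply_same_eq_zero_iff hB_nonneg hB_symm).1 (by simp [B, hd])
  simpa [B, hsymm v d] using LinearMap.congr_fun hker v

theorem ConcaveOn.fderiv_apply_eq_fderiv_apply {f : E → ℝ} (hconc : ConcaveOn ℝ univ f)
    (hf : ContDiff ℝ 2 f) {d : E} (hd : ∀ y, fderiv ℝ (fderiv ℝ f) y d d = 0) (x y : E) :
    fderiv ℝ f x d = fderiv ℝ f y d := by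
  have hderiv (z : E) := hasFDerivAt_fderiv_apply (hf.differentiable_fderiv le_rfl z) d
  refine is_const_of_fderiv_eq_zero (fun z => (hderiv z).differentiableAt) (fun z => ?_) x y
  ext v
  simp [(hderiv z).fderiv, hconc.fderiv_fderiv_apply_eq_zero hf (hd z)]

end Calculus

section ZeroSum

variable {ι : Type*} [Fintype ι]

theorem sum_sub_sum_div_card_eq_zero (g : ι → ℝ) :
    ∑ i, (g i - (∑ j, g j) / Fintype.card ι) = 0 := by
  rcases isEmpty_or_nonempty ι with _ | _
  · simp
  · rw [Finset.sum_sub_distrib, Finset.sum_const, Finset.card_univ, nsmul_eq_mul,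
      mul_div_cancel₀ _ (by positivity), sub_self]

theorem LinearMap.exists_sum_eq_zero_and_apply_eq_of_sum_eq_zero (A : (ι → ℝ) →ₗ[ℝ] ℝ) :
    ∃ β : ι → ℝ, ∑ i, β i = 0 ∧ ∀ d : ι → ℝ, ∑ i, d i = 0 → A d = ∑ i, β i * d i := by
  classical
  obtain ⟨a, ha⟩ : ∃ a : ι → ℝ, ∀ d, A d = ∑ i, a i * d i :=
    ⟨fun i => A fun j => if i = j then 1 else 0,
      fun d => by simp [A.pi_apply_eq_sum_univ d, mul_comm]⟩
  refine ⟨fun i => a i - (∑ j, a j) / Fintype.card ι, sum_sub_sum_div_card_eq_zero a,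
    fun d hd => ?_⟩
  simp only [ha, sub_mul, Finset.sum_sub_distrib, ← Finset.mul_sum, hd, mul_zero, sub_zero]

end ZeroSum

/-- A concave `C²` function on `ℝ^N` whose Hessian quadratic form
vanishes on all zero-sum directions has the structural form
`f(x) = G(∑ᵢ xᵢ) + βᵀx` with `∑ᵢ βᵢ = 0`. -/
theorem structural_form_of_zero_sum_flat
    {N : ℕ} (f : (Fin N → ℝ) → ℝ)
    (hf : ContDiff ℝ 2 f) (hconc : ConcaveOn ℝ Set.univ f)
    (hflat : ∀ (x d : Fin N → ℝ), (∑ i, d i) = 0 →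
      fderiv ℝ (fun y => fderiv ℝ f y d) x d = 0) :
    ∃ (G : ℝ → ℝ) (β : Fin N → ℝ), (∑ i, β i) = 0 ∧
      ∀ x : Fin N → ℝ, f x = G (∑ i, x i) + ∑ i, β i * x i := by
  have hhess (d : Fin N → ℝ) (hd : ∑ i, d i = 0) (y : Fin N → ℝ) :
      fderiv ℝ (fderiv ℝ f) y d d = 0 := by
    simpa [(hasFDerivAt_fderiv_apply (hf.differentiable_fderiv le_rfl y) d).fderiv]
      using hflat y d hd
  obtain ⟨β, hβ, hAβ⟩ :=
    LinearMap.exists_sum_eq_zero_and_apply_eq_of_sum_eq_zero (fderiv ℝ f 0 : (Fin N → ℝ) →ₗ[ℝ] ℝ)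
  refine ⟨fun s => f fun _ => s / N, β, hβ, fun x => ?_⟩
  set c : Fin N → ℝ := fun _ => (∑ j, x j) / N
  have hd : ∑ i, (x - c) i = 0 := by simpa [c] using sum_sub_sum_div_card_eq_zero x
  have hdir (y : Fin N → ℝ) : fderiv ℝ f y (x - c) = ∑ i, β i * (x - c) i := by
    rw [hconc.fderiv_apply_eq_fderiv_apply hf (hhess _ hd) y 0]
    exact hAβ _ hd
  have := apply_add_eq_of_forall_fderiv_apply_eq (hf.differentiable two_ne_zero) hdir c
  simpa [mul_sub, Finset.sum_sub_distrib, ← Finset.sum_mul, hβ, c] using this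
end

section
/- Let $N = 3$ and define affine functions $\bar\Lambda_i(x) = a_i^\top x - 1$ on $\mathbb{R}^3_+$ with $a_1 = (1, 0, 0.75)^\top$, $a_2 = (0, 1, 0.75)^\top$, $a_3 = (0.5, 0.5, 0.75)^\top$. For the acceptance criterion $\bar\Lambda_i(m) \ge 0$ (deterministic shock $X = 0$), the Nash system $m_i = \inf\{s \in \mathbb{R} \mid \bar\Lambda_i(s, m_{-i}) \ge 0, (s, m_{-i}) \in \mathbb{R}^3_+\}$ admits, for every $t \in [0,1]$, the solution $m = (1-t, 1-t, 4t/3)^\top$; in particular there are infinitely many Nash allocations. -/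
/-- The coefficient vectors of the alternative decomposition
`Λ̄ᵢ(x) = aᵢᵀ x - 1`. -/
noncomputable def aCoef : Fin 3 → Fin 3 → ℝ :=
  ![![1, 0, 3/4], ![0, 1, 3/4], ![1/2, 1/2, 3/4]]

/-- `m` is a Nash allocation for the affine decomposition with deterministic
shock `X = 0`: each `m i` is the infimum (greatest lower bound) of capitals `s`
such that the capital vector with `i`-th entry replaced by `s` is nonnegative
and bank `i`'s affine aggregation is acceptable. -/
def IsNashAlloc3 (m : Fin 3 → ℝ) : Prop :=
  ∀ i : Fin 3,
    IsGLB {s : ℝ | (∀ j, 0 ≤ Function.update m i s j) ∧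
      0 ≤ (∑ j, aCoef i j * Function.update m i s j) - 1} (m i)

/-! Once the other capitals are nonnegative, bank `i`'s acceptance set is the half-line
`s ≥ max 0 ((1 - ∑_{j ≠ i} a_ij m_j) / a_ii)`, so a nonnegative `m` is a Nash allocation as
soon as every coordinate equals this best response. Along `(1-t, 1-t, 4t/3)` banks 1 and 2
face the residual `1 - t` with `a_ii = 1`, and bank 3 faces the residual `t` with
`a_33 = 3/4`; the fixed points therefore form a whole segment. -/

open Function

theorem isGLB_setOf_nonneg_and_le_mul {α c : ℝ} (hα : 0 < α) :
    IsGLB {s : ℝ | 0 ≤ s ∧ c ≤ α * s} (max 0 (c / α)) := by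
  have h : {s : ℝ | 0 ≤ s ∧ c ≤ α * s} = Set.Ici (max 0 (c / α)) := by
    ext s
    simp only [Set.mem_ofPred_eq, Set.mem_Ici, max_le_iff, div_le_iff₀' hα]
  exact h ▸ isGLB_Ici

theorem sum_mul_update_eq {ι : Type*} [Fintype ι] [DecidableEq ι] (a m : ι → ℝ) (i : ι)
    (s : ℝ) : ∑ j, a j * update m i s j = a i * s + ∑ j, a j * update m i 0 j := by
  have h : ∀ j,
      a j * update m i s j = a j * update m i 0 j + (Pi.single i (a i * s) : ι → ℝ) j := by
    intro j
    rcases eq_or_ne j i with rfl | hj <;> simp [*]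
  simp only [h, Finset.sum_add_distrib, Finset.sum_pi_single', Finset.mem_univ, if_true]
  ring

theorem setOf_update_acceptable_eq {ι : Type*} [Fintype ι] [DecidableEq ι] (a m : ι → ℝ)
    (i : ι) (hm : ∀ j ≠ i, 0 ≤ m j) :
    {s : ℝ | (∀ j, 0 ≤ update m i s j) ∧ 0 ≤ (∑ j, a j * update m i s j) - 1} =
      {s | 0 ≤ s ∧ 1 - ∑ j, a j * update m i 0 j ≤ a i * s} := by
  ext s
  have hupd : (∀ j, 0 ≤ update m i s j) ↔ 0 ≤ s := by
    refine ⟨fun h => by simpa using h i, fun hs j => ?_⟩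
    rcases eq_or_ne j i with rfl | hj
    · simpa using hs
    · simpa [hj] using hm j hj
  simp only [Set.mem_ofPred_eq, hupd, sum_mul_update_eq a m i s]
  constructor <;> rintro ⟨h1, h2⟩ <;> exact ⟨h1, by linarith⟩

theorem aCoef_diag_pos (i : Fin 3) : 0 < aCoef i i := by
  fin_cases i <;> norm_num [aCoef]

theorem isNashAlloc3_of_forall_eq_max {m : Fin 3 → ℝ} (hm : ∀ j, 0 ≤ m j)
    (h : ∀ i, max 0 ((1 - ∑ j, aCoef i j * update m i 0 j) / aCoef i i) = m i) :
    IsNashAlloc3 m := by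
  intro i
  rw [setOf_update_acceptable_eq _ m i fun j _ => hm j, ← h i]
  exact isGLB_setOf_nonneg_and_le_mul (aCoef_diag_pos i)

theorem isNashAlloc3_of_mem_Icc {t : ℝ} (ht : t ∈ Set.Icc (0 : ℝ) 1) :
    IsNashAlloc3 ![1 - t, 1 - t, 4 * t / 3] := by
  obtain ⟨h0, h1⟩ := ht
  refine isNashAlloc3_of_forall_eq_max (fun j => ?_) (fun i => ?_)
  · fin_cases j <;> simp <;> linarith
  · fin_cases i <;>
      simp [Fin.sum_univ_three, aCoef, update_apply] <;> ring_nf <;> simp [h0, h1]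

/-- For every `t ∈ [0,1]`, the vector `(1-t, 1-t, 4t/3)` is a Nash
allocation; in particular there are infinitely many Nash allocations. -/
theorem affine_decomposition_nonunique_nash :
    (∀ t ∈ Set.Icc (0:ℝ) 1, IsNashAlloc3 ![1 - t, 1 - t, 4 * t / 3]) ∧
      {m : Fin 3 → ℝ | IsNashAlloc3 m}.Infinite := by
  refine ⟨fun t ht => isNashAlloc3_of_mem_Icc ht, ?_⟩
  have hinj : Set.InjOn (fun t : ℝ => ![1 - t, 1 - t, 4 * t / 3]) (Set.Icc 0 1) :=
    fun a _ b _ hab => by simpa using congrFun hab 0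
  refine ((Set.Icc_infinite zero_lt_one).image hinj).mono ?_
  rintro _ ⟨t, ht, rfl⟩
  exact isNashAlloc3_of_mem_Icc ht
end
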